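/- Let Γ be a finite connected simplicial graph with no SIL whose vertices are labeled by nontrivial cyclic groups. Then the correspondence v ↦ p_v := ∏_C p_{v,C} (the product over all connected components C of Γ∖st(v)) induces a group homomorphism f̃: G_{Γ₀} → G_{Γ̃}. -/

import Mathlib

/-!
Distinct vertices `p_{v,C}`, `p_{w,D}` of `Γ̃` are adjacent whenever `v = w` or `v, w` are
adjacent in `Γ`.
Hence `g ↦ ∏_C g_{v,C}` is a homomorphism `G v → G_{Γ̃}` for each `v`, and the images of
adjacent vertex groups commute, so these homomorphisms factor through the graph product.
-/

open Monoid

namespace ArXiv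

universe u uG

variable {V : Type u}

/-- The star of a vertex: the vertex together with its neighbors. -/
def star (Γ : SimpleGraph V) (v : V) : Set V := insert v (Γ.neighborSet v)

/-- `C ⊆ V` is the vertex set of a connected component of the full subgraph of `Γ`
induced on `S`. -/
def IsCompOf (Γ : SimpleGraph V) (S : Set V) (C : Set V) : Prop :=
  ∃ c : (Γ.induce S).ConnectedComponent, C = Subtype.val '' c.supp

/-- `Γ` has a separating intersection of links: there are distinct non-adjacent vertices
`v, w` such that some connected component of `Γ ∖ (lk(v) ∩ lk(w))` contains neither `v`
nor `w`. -/
def HasSIL (Γ : SimpleGraph V) : Prop :=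
  ∃ v w : V, v ≠ w ∧ ¬ Γ.Adj v w ∧
    ∃ C : Set V, IsCompOf Γ ((Γ.neighborSet v ∩ Γ.neighborSet w)ᶜ) C ∧ v ∉ C ∧ w ∉ C

variable (Γ : SimpleGraph V) (G : V → Type uG) [∀ v, Group (G v)]

/-- The commutator relators defining the graph product. -/
def rels : Set (Monoid.CoprodI G) :=
  {x | ∃ (v w : V) (_ : Γ.Adj v w) (g : G v) (h : G w),
    x = CoprodI.of g * CoprodI.of h * (CoprodI.of g)⁻¹ * (CoprodI.of h)⁻¹}

/-- The graph product of the vertex groups `G v` over the graph `Γ`: the quotient of the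
free product by the normal closure of the commutators of adjacent vertex groups. -/
def GraphProduct : Type (max u uG) :=
  Monoid.CoprodI G ⧸ Subgroup.normalClosure (rels Γ G)

instance : Group (GraphProduct Γ G) :=
  inferInstanceAs (Group (Monoid.CoprodI G ⧸ Subgroup.normalClosure (rels Γ G)))

/-- The canonical map from a vertex group into the graph product. -/
def of {v : V} : G v →* GraphProduct Γ G :=
  (QuotientGroup.mk' (Subgroup.normalClosure (rels Γ G))).comp CoprodI.of

theorem of_commute {v w : V} (h : Γ.Adj v w) (g : G v) (k : G w) :
    Commute (of Γ G g) (of Γ G k) := by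
  rw [← commutatorElement_eq_one_iff_commute]
  have hmem : (CoprodI.of g * CoprodI.of k * (CoprodI.of g)⁻¹ * (CoprodI.of k)⁻¹ :
      Monoid.CoprodI G) ∈ Subgroup.normalClosure (rels Γ G) :=
    Subgroup.subset_normalClosure ⟨v, w, h, g, k, rfl⟩
  have h1 : (QuotientGroup.mk' (Subgroup.normalClosure (rels Γ G)))
      (CoprodI.of g * CoprodI.of k * (CoprodI.of g)⁻¹ * (CoprodI.of k)⁻¹) = 1 :=
    (QuotientGroup.eq_one_iff _).mpr hmem
  simp only [map_mul, map_inv] at h1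
  exact (commutatorElement_def _ _).trans h1

/-- `π` is the partial conjugation `π_{v,C}`, for vertex groups with chosen generators
`gen`: it conjugates the generators in `C` by (the generator of) `v` and fixes all other
generators. -/
def IsPartialConj (gen : ∀ v, G v) (π : MulAut (GraphProduct Γ G)) (v : V) (C : Set V) :
    Prop :=
  (∀ u ∈ C, ∀ g : G u, π (of Γ G g) = of Γ G (gen v) * of Γ G g * (of Γ G (gen v))⁻¹) ∧
  (∀ u ∉ C, ∀ g : G u, π (of Γ G g) = of Γ G g)

/-- `π` is the partial conjugation `π_{a,C}` by the element `a` of the vertex group `G v`: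
it conjugates the vertex groups in `C` by `a` and fixes all other vertex groups. -/
def IsPartialConjBy {v : V} (a : G v) (π : MulAut (GraphProduct Γ G)) (C : Set V) : Prop :=
  (∀ u ∈ C, ∀ g : G u, π (of Γ G g) = of Γ G a * of Γ G g * (of Γ G a)⁻¹) ∧
  (∀ u ∉ C, ∀ g : G u, π (of Γ G g) = of Γ G g)

/-- The vertex set of the graph `Γ̃`: pairs `p_{v,C}` where `C` is a connected component
of `Γ ∖ st(v)`. -/
def TV : Type u := {p : V × Set V // IsCompOf Γ ((star Γ p.1)ᶜ) p.2}

/-- The graph `Γ̃`: vertices `p_{v,C}` and `p_{w,D}` are joined by an edge unless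
`v, w` are distinct non-adjacent vertices with `v ∈ D` and `w ∈ C`. -/
def tilde : SimpleGraph (TV Γ) where
  Adj p q := p ≠ q ∧
    ¬(p.1.1 ≠ q.1.1 ∧ ¬ Γ.Adj p.1.1 q.1.1 ∧ p.1.1 ∈ q.1.2 ∧ q.1.1 ∈ p.1.2)
  symm := by
    refine ⟨?_⟩
    rintro p q ⟨h1, h2⟩
    exact ⟨h1.symm, fun ⟨a, b, c, d⟩ => h2 ⟨a.symm, fun e => b e.symm, d, c⟩⟩
  loopless := ⟨fun p h => h.1 rfl⟩

/-- The graph product `G_{Γ̃}`, where the vertex `p_{v,C}` is labeled by (a copy of) the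
group `G v`. -/
abbrev TildeProduct : Type (max u uG) :=
  GraphProduct (tilde Γ) (fun p : TV Γ => G p.1.1)

/-- The element `p_v = ∏_C p_{v,C} ∈ G_{Γ̃}`, the product over all connected components
`C` of `Γ ∖ st(v)` (the factors pairwise commute). -/
noncomputable def pvert [Finite V] (gen : ∀ v, G v) (v : V) : TildeProduct Γ G :=
  haveI : Fintype {C : Set V // IsCompOf Γ ((star Γ v)ᶜ) C} := Fintype.ofFinite _
  Finset.noncommProd (Finset.univ : Finset {C : Set V // IsCompOf Γ ((star Γ v)ᶜ) C})
    (fun c => of (tilde Γ) (fun p : TV Γ => G p.1.1) (v := ⟨(v, c.1), c.2⟩) (gen v))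
    (by
      intro a _ b _ hab
      have hadj : (tilde Γ).Adj ⟨(v, a.1), a.2⟩ ⟨(v, b.1), b.2⟩ := by
        refine ⟨fun h => hab (Subtype.ext (congrArg (fun x : TV Γ => x.1.2) h)), ?_⟩
        rintro ⟨hne, -⟩
        exact hne rfl
      exact of_commute (tilde Γ) (fun p : TV Γ => G p.1.1) hadj (gen v) (gen v))

/-- The set `Δ` of vertices adjacent to every other vertex of `Γ`. -/
def Delta (Γ : SimpleGraph V) : Set V := {v | ∀ u, u ≠ v → Γ.Adj v u}

/-- The subgroup of the graph product generated by the vertex groups `G v`, `v ∈ T`. -/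
def vertexSubgroup (T : Set V) : Subgroup (GraphProduct Γ G) :=
  Subgroup.closure {x | ∃ v ∈ T, ∃ g : G v, x = of Γ G g}

/-- `w` is a reduced word for the element `g` of the graph product: a minimal length
expression of `g` as a product of nontrivial elements of vertex groups. -/
def IsReducedWord (g : GraphProduct Γ G) (w : List (Σ v : V, G v)) : Prop :=
  (w.map fun l => of Γ G l.2).prod = g ∧ (∀ l ∈ w, l.2 ≠ 1) ∧
    ∀ w' : List (Σ v : V, G v), (w'.map fun l => of Γ G l.2).prod = g →
      w.length ≤ w'.length

theorem rels_le_ker_coprodILift {H : Type*} [Group H] (φ : ∀ v, G v →* H)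
    (hφ : ∀ v w, Γ.Adj v w → ∀ (g : G v) (h : G w), Commute (φ v g) (φ w h)) :
    Subgroup.normalClosure (rels Γ G) ≤ (CoprodI.lift φ).ker := by
  refine Subgroup.normalClosure_le_normal ?_
  rintro x ⟨v, w, hvw, g, h, rfl⟩
  rw [SetLike.mem_coe, MonoidHom.mem_ker, ← commutatorElement_def, map_commutatorElement,
    CoprodI.lift_of, CoprodI.lift_of, commutatorElement_eq_one_iff_commute]
  exact hφ v w hvw g h

def GraphProduct.lift {H : Type*} [Group H] (φ : ∀ v, G v →* H)
    (hφ : ∀ v w, Γ.Adj v w → ∀ (g : G v) (h : G w), Commute (φ v g) (φ w h)) :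
    GraphProduct Γ G →* H :=
  QuotientGroup.lift _ (CoprodI.lift φ) (rels_le_ker_coprodILift Γ G φ hφ)

theorem GraphProduct.lift_of {H : Type*} [Group H] (φ : ∀ v, G v →* H)
    (hφ : ∀ v w, Γ.Adj v w → ∀ (g : G v) (h : G w), Commute (φ v g) (φ w h))
    {v : V} (g : G v) : GraphProduct.lift Γ G φ hφ (of Γ G g) = φ v g :=
  CoprodI.lift_of _ _

section Tilde

theorem tilde_adj_of_eq_or_adj {p q : TV Γ} (hpq : p ≠ q)
    (h : p.1.1 = q.1.1 ∨ Γ.Adj p.1.1 q.1.1) : (tilde Γ).Adj p q :=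
  ⟨hpq, fun ⟨hne, hnadj, _, _⟩ => h.elim hne hnadj⟩

abbrev ofTilde (p : TV Γ) : G p.1.1 →* TildeProduct Γ G :=
  of (tilde Γ) (fun p : TV Γ => G p.1.1) (v := p)

/-- The component `C` of `Γ ∖ st(v)`, as the vertex `p_{v,C}` of `Γ̃`. -/
abbrev compVertex {v : V} (C : {C : Set V // IsCompOf Γ ((star Γ v)ᶜ) C}) : TV Γ :=
  ⟨(v, C.1), C.2⟩

theorem commute_ofTilde_compVertex {v w : V} (hvw : v = w ∨ Γ.Adj v w)
    {C : {C : Set V // IsCompOf Γ ((star Γ v)ᶜ) C}}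
    {D : {D : Set V // IsCompOf Γ ((star Γ w)ᶜ) D}}
    (hCD : compVertex Γ C ≠ compVertex Γ D) (g : G v) (h : G w) :
    Commute (ofTilde Γ G (compVertex Γ C) g) (ofTilde Γ G (compVertex Γ D) h) :=
  of_commute (tilde Γ) (fun p : TV Γ => G p.1.1) (tilde_adj_of_eq_or_adj Γ hCD hvw) g h

theorem compVertex_injective (v : V) :
    Function.Injective (compVertex Γ (v := v)) :=
  fun _ _ h => Subtype.ext (congrArg (fun p : TV Γ => p.1.2) h)

theorem pairwise_commute_ofTilde_compVertex (v : V) :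
    Pairwise fun C D : {C : Set V // IsCompOf Γ ((star Γ v)ᶜ) C} => ∀ g h : G v,
      Commute (ofTilde Γ G (compVertex Γ C) g) (ofTilde Γ G (compVertex Γ D) h) :=
  fun _ _ hCD => commute_ofTilde_compVertex Γ G (Or.inl rfl) ((compVertex_injective Γ v).ne hCD)

variable [Finite V]

noncomputable instance (v : V) : Fintype {C : Set V // IsCompOf Γ ((star Γ v)ᶜ) C} :=
  Fintype.ofFinite _

/-- `g ↦ ∏_C g_{v,C}`, the product of the copies of `g` at all the vertices `p_{v,C}`. -/
noncomputable def pvertHom (v : V) : G v →* TildeProduct Γ G :=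
  (MonoidHom.noncommPiCoprod (fun C => ofTilde Γ G (compVertex Γ C))
    (pairwise_commute_ofTilde_compVertex Γ G v)).comp
  (Pi.constMonoidHom _ (G v))

theorem pvertHom_gen (gen : ∀ v, G v) (v : V) : pvertHom Γ G v (gen v) = pvert Γ G gen v :=
  rfl

theorem commute_pvertHom_of_adj {v w : V} (hvw : Γ.Adj v w) (g : G v) (h : G w) :
    Commute (pvertHom Γ G v g) (pvertHom Γ G w h) := by
  refine MonoidHom.commute_noncommPiCoprod (hcomm := pairwise_commute_ofTilde_compVertex Γ G w)
    _ (fun D y => Commute.symm ?_) _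
  refine MonoidHom.commute_noncommPiCoprod (hcomm := pairwise_commute_ofTilde_compVertex Γ G v)
    _ (fun C x => Commute.symm ?_) _
  refine commute_ofTilde_compVertex Γ G (Or.inr hvw) (fun hCD => ?_) x y
  exact hvw.ne (congrArg (fun p : TV Γ => p.1.1) hCD)

end Tilde

theorem ftilde_exists_general {V : Type u} [Finite V] (Γ : SimpleGraph V)
    (G : V → Type uG) [∀ v, Group (G v)]
    (gen : ∀ v, G v) :
    ∃ f : GraphProduct (Γ.induce (Delta Γ)ᶜ) (fun u : ↥(Delta Γ)ᶜ => G u.1) →*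
        TildeProduct Γ G,
      ∀ u : ↥(Delta Γ)ᶜ,
        f (of (Γ.induce (Delta Γ)ᶜ) (fun x : ↥(Delta Γ)ᶜ => G x.1) (v := u) (gen u.1)) =
          pvert Γ G gen u.1 :=
  ⟨GraphProduct.lift _ _ (fun u => pvertHom Γ G u.1)
      (fun _ _ hab g h => commute_pvertHom_of_adj Γ G hab g h),
    fun u => (GraphProduct.lift_of _ _ _ _ _).trans (pvertHom_gen Γ G gen u.1)⟩

/-- The correspondence `v ↦ p_v = ∏_C p_{v,C}` induces a group
homomorphism `f̃ : G_{Γ₀} → G_{Γ̃}`. -/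
theorem ftilde_exists {V : Type u} [Finite V] (Γ : SimpleGraph V)
    (hconn : Γ.Connected) (hsil : ¬ HasSIL Γ)
    (G : V → Type uG) [∀ v, Group (G v)] [∀ v, Nontrivial (G v)]
    (gen : ∀ v, G v) (hgen : ∀ v, Subgroup.zpowers (gen v) = ⊤) :
    ∃ f : GraphProduct (Γ.induce (Delta Γ)ᶜ) (fun u : ↥(Delta Γ)ᶜ => G u.1) →*
        TildeProduct Γ G,
      ∀ u : ↥(Delta Γ)ᶜ,
        f (of (Γ.induce (Delta Γ)ᶜ) (fun x : ↥(Delta Γ)ᶜ => G x.1) (v := u) (gen u.1)) =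
          pvert Γ G gen u.1 :=
  ftilde_exists_general Γ G gen

end ArXiv
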